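/- In the sequent calculus G3-N (positive intuitionistic rules plus the negation rule (N): from Γ, ¬α, β ⇒ α and Γ, ¬α, α ⇒ β infer Γ, ¬α ⇒ ¬β), the weakening rule is height-preserving admissible: if Γ ⇒ φ is derivable with height at most n, then Γ, α ⇒ φ is derivable with height at most n. -/
import Mathlib


inductive Fml where
  | var : Nat → Fml
  | top : Fml
  | and : Fml → Fml → Fml
  | or  : Fml → Fml → Fml
  | imp : Fml → Fml → Fml
  | neg : Fml → Fml
deriving DecidableEq

/-- Names for the four possible negation rules. -/
inductive NegRule where
  | n | nef | copc | an
deriving DecidableEq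

/-- `Der R Γ φ k`: the sequent `Γ ⇒ φ` is derivable with height at most `k`
in the G3 calculus whose negation rules are those satisfying `R`.
Axioms are available at every height; each rule adds one to the height. -/
inductive Der (R : NegRule → Prop) : Multiset Fml → Fml → Nat → Prop where
  | ax (Γ : Multiset Fml) (p k) : Der R (Fml.var p ::ₘ Γ) (Fml.var p) k
  | top (Γ : Multiset Fml) (k) : Der R Γ Fml.top k
  | andR {Γ α β k} : Der R Γ α k → Der R Γ β k → Der R Γ (Fml.and α β) (k+1)
  | andL {Γ α β φ k} : Der R (α ::ₘ β ::ₘ Γ) φ k → Der R (Fml.and α β ::ₘ Γ) φ (k+1)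
  | orR1 {Γ α β k} : Der R Γ α k → Der R Γ (Fml.or α β) (k+1)
  | orR2 {Γ α β k} : Der R Γ β k → Der R Γ (Fml.or α β) (k+1)
  | orL {Γ α β φ k} : Der R (α ::ₘ Γ) φ k → Der R (β ::ₘ Γ) φ k →
      Der R (Fml.or α β ::ₘ Γ) φ (k+1)
  | impR {Γ α β k} : Der R (α ::ₘ Γ) β k → Der R Γ (Fml.imp α β) (k+1)
  | impL {Γ α β φ k} : Der R (Fml.imp α β ::ₘ Γ) α k → Der R (β ::ₘ Γ) φ k →
      Der R (Fml.imp α β ::ₘ Γ) φ (k+1)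
  | nrule {Γ α β k} : R NegRule.n → Der R (β ::ₘ Fml.neg α ::ₘ Γ) α k →
      Der R (α ::ₘ Fml.neg α ::ₘ Γ) β k → Der R (Fml.neg α ::ₘ Γ) (Fml.neg β) (k+1)
  | nef {Γ α β k} : R NegRule.nef → Der R (Fml.neg α ::ₘ Γ) α k →
      Der R (Fml.neg α ::ₘ Γ) (Fml.neg β) (k+1)
  | copc {Γ α β k} : R NegRule.copc → Der R (β ::ₘ Fml.neg α ::ₘ Γ) α k →
      Der R (Fml.neg α ::ₘ Γ) (Fml.neg β) (k+1)
  | an {Γ α k} : R NegRule.an → Der R (α ::ₘ Γ) (Fml.neg α) k → Der R Γ (Fml.neg α) (k+1)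

/-- The calculus G3-N. -/
def NCalc : NegRule → Prop := fun r => r = NegRule.n
/-- The calculus G3-NeF. -/
def NeFCalc : NegRule → Prop := fun r => r = NegRule.nef
/-- The calculus G3-CoPC. -/
def CoPCCalc : NegRule → Prop := fun r => r = NegRule.copc
/-- The calculus G3-MPC (contraposition plus (AN)). -/
def MPCCalc : NegRule → Prop := fun r => r = NegRule.copc ∨ r = NegRule.an

/-- Derivability (at some height). -/
def Derivable (R : NegRule → Prop) (Γ : Multiset Fml) (φ : Fml) : Prop := ∃ k, Der R Γ φ k


theorem Der.weaken {R : NegRule → Prop} {Γ : Multiset Fml} {φ : Fml} {n : Nat}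
    (w : Fml) (h : Der R Γ φ n) : Der R (w ::ₘ Γ) φ n := by
  induction h with
  | ax Γ p k => rw [Multiset.cons_swap]; exact .ax _ p k
  | top Γ k => exact .top _ k
  | andR _ _ ih1 ih2 => exact .andR ih1 ih2
  | andL _ ih =>
      rw [Multiset.cons_swap]
      exact .andL (by rw [Multiset.cons_swap w, Multiset.cons_swap w] at ih; exact ih)
  | orR1 _ ih => exact .orR1 ih
  | orR2 _ ih => exact .orR2 ih
  | orL _ _ ih1 ih2 =>
      rw [Multiset.cons_swap]
      exact .orL (by rw [Multiset.cons_swap w] at ih1; exact ih1)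
        (by rw [Multiset.cons_swap w] at ih2; exact ih2)
  | impR _ ih => exact .impR (by rw [Multiset.cons_swap w] at ih; exact ih)
  | impL _ _ ih1 ih2 =>
      rw [Multiset.cons_swap]
      exact .impL (by rw [Multiset.cons_swap w] at ih1; exact ih1)
        (by rw [Multiset.cons_swap w] at ih2; exact ih2)
  | nrule hr _ _ ih1 ih2 =>
      rw [Multiset.cons_swap]
      exact .nrule hr (by rw [Multiset.cons_swap w, Multiset.cons_swap w] at ih1; exact ih1)
        (by rw [Multiset.cons_swap w, Multiset.cons_swap w] at ih2; exact ih2)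
  | nef hr _ ih =>
      rw [Multiset.cons_swap]
      exact .nef hr (by rw [Multiset.cons_swap w] at ih; exact ih)
  | copc hr _ ih =>
      rw [Multiset.cons_swap]
      exact .copc hr (by rw [Multiset.cons_swap w, Multiset.cons_swap w] at ih; exact ih)
  | an hr _ ih => exact .an hr (by rw [Multiset.cons_swap w] at ih; exact ih)

/-- Height-preserving admissibility of weakening in G3-N. -/
theorem weakening_hp_admissible_N :
    ∀ (Γ : Multiset Fml) (φ α : Fml) (n : Nat),
      Der NCalc Γ φ n → Der NCalc (α ::ₘ Γ) φ n := by
  intro Γ φ α n h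
  exact h.weaken α
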